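/- arXiv:2509.13238 — 2 statements merged into one kernel-verified Lean document; each statement's English description precedes it below -/
import Mathlib

section
/- Let F be a field of characteristic 0, and let a_1, a_2 ∈ F be nonzero. Let h ∈ F[x_1, x_2] be a nonzero homogeneous polynomial of degree k, and let d ∈ ℕ. Then (a_1 x_1 + a_2 x_2)^d · h, when written as Σ_{i+j=d+k} c_{i,j} x_1^i x_2^j, has at least d+1 nonzero coefficients c_{i,j}. -/
/-!
Setting `x₂ = 1` turns a homogeneous polynomial of degree `n` into a univariate polynomial with
the same nonzero coefficients, and turns `(a₁ x₁ + a₂ x₂)^d * h` into a nonzero multiple of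
`(X - r)^d` with `r = -a₂ / a₁ ≠ 0`. Such a polynomial has at least `d + 1` terms: once the
largest power of `X` is divided out, the constant term is nonzero, so differentiating loses a
term, while the derivative is still nonzero (characteristic 0) and divisible by `(X - r)^(d-1)`.
-/

open Finset

namespace Polynomial

variable {R : Type*}

theorem card_support_X_pow_mul [Semiring R] (m : ℕ) (f : R[X]) :
    #(X ^ m * f).support = #f.support := by
  have : (X ^ m * f).support = f.support.image (· + m) := by
    ext i
    simp only [mem_support_iff, coeff_X_pow_mul', mem_image]
    constructor
    · intro hi
      split_ifs at hi with hmi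
      · exact ⟨i - m, hi, Nat.sub_add_cancel hmi⟩
      · exact absurd rfl hi
    · rintro ⟨j, hj, rfl⟩
      simpa using hj
  rw [this, card_image_of_injective _ (add_left_injective m)]

theorem card_support_derivative_lt [Semiring R] {f : R[X]} (hf : f.coeff 0 ≠ 0) :
    #(derivative f).support < #f.support := by
  have hsub : insert 0 ((derivative f).support.image (· + 1)) ⊆ f.support := by
    simp only [insert_subset_iff, mem_support_iff, image_subset_iff, coeff_derivative]
    exact ⟨hf, fun j hj h0 => hj (by simp [h0])⟩
  simpa [card_insert_of_notMem, card_image_of_injective _ (add_left_injective 1)]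
    using card_le_card hsub

theorem lt_card_support_of_X_sub_C_pow_dvd [CommRing R] [IsDomain R] [CharZero R] {r : R}
    (hr : r ≠ 0) {d : ℕ} {f : R[X]} (hf : f ≠ 0) (hdvd : (X - C r) ^ d ∣ f) :
    d < #f.support := by
  induction d generalizing f with
  | zero => exact card_pos.mpr (support_nonempty.mpr hf)
  | succ d ih =>
    obtain ⟨q, hfq, hq0⟩ := exists_eq_pow_rootMultiplicity_mul_and_not_dvd f hf 0
    rw [C_0, sub_zero] at hfq hq0
    rw [X_dvd_iff] at hq0
    have hq : q ≠ 0 := by rintro rfl; exact hq0 (coeff_zero 0)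
    have hdvd_q : (X - C r) ^ (d + 1) ∣ q := by
      refine (prime_X_sub_C r).pow_dvd_of_dvd_mul_left _ ?_ (hfq ▸ hdvd)
      simpa [dvd_iff_isRoot] using pow_ne_zero (f.rootMultiplicity 0) hr
    have hq' : derivative q ≠ 0 := by
      rw [derivative_ne_zero]
      have := natDegree_le_of_dvd hdvd_q hq
      rw [natDegree_pow, natDegree_X_sub_C] at this
      omega
    calc d + 1 ≤ #(derivative q).support :=
          ih hq' (by simpa using pow_sub_one_dvd_derivative_of_pow_dvd hdvd_q)
      _ < #q.support := card_support_derivative_lt hq0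
      _ = #f.support := by rw [hfq, card_support_X_pow_mul]

end Polynomial

open MvPolynomial
open scoped Classical

namespace MvPolynomial

variable {R : Type*} [CommSemiring R]

noncomputable def dehomogenize : MvPolynomial (Fin 2) R →ₐ[R] Polynomial R :=
  aeval ![Polynomial.X, 1]

theorem coeff_dehomogenize (P : MvPolynomial (Fin 2) R) (i : ℕ) :
    (dehomogenize P).coeff i = ∑ m ∈ P.support with m 0 = i, P.coeff m := by
  conv_lhs => rw [P.as_sum]
  rw [map_sum, Polynomial.finsetSum_coeff, sum_filter]
  refine sum_congr rfl fun m _ => ?_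
  simp [dehomogenize, aeval_monomial, Finsupp.prod_fintype, Fin.prod_univ_two,
    Polynomial.coeff_X_pow, eq_comm]

theorem IsHomogeneous.eq_single_add_single {P : MvPolynomial (Fin 2) R} {n : ℕ}
    (hP : P.IsHomogeneous n) {m : Fin 2 →₀ ℕ} (hm : m ∈ P.support) :
    m 0 ≤ n ∧ m = Finsupp.single 0 (m 0) + Finsupp.single 1 (n - m 0) := by
  have hdeg : m 0 + m 1 = n := by
    simpa [Finsupp.weight_apply, Finsupp.sum_fintype, Fin.sum_univ_two] using
      hP (mem_support_iff.mp hm)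
  refine ⟨by omega, ?_⟩
  ext j
  fin_cases j
  · simp
  · simp; omega

theorem IsHomogeneous.coeff_dehomogenize {P : MvPolynomial (Fin 2) R} {n : ℕ}
    (hP : P.IsHomogeneous n) (i : ℕ) :
    (dehomogenize P).coeff i =
      if i ≤ n then P.coeff (Finsupp.single 0 i + Finsupp.single 1 (n - i)) else 0 := by
  rw [MvPolynomial.coeff_dehomogenize]
  split_ifs with hi
  · have hsub : {m ∈ P.support | m 0 = i} ⊆ {Finsupp.single 0 i + Finsupp.single 1 (n - i)} := by
      intro m hm
      obtain ⟨hmP, rfl⟩ := mem_filter.mp hm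
      exact mem_singleton.mpr (hP.eq_single_add_single hmP).2
    rw [sum_subset hsub, sum_singleton]
    intro m hm hm'
    simp_all
  · refine sum_eq_zero fun m hm => absurd ?_ hi
    obtain ⟨hmP, rfl⟩ := mem_filter.mp hm
    exact (hP.eq_single_add_single hmP).1

theorem IsHomogeneous.support_dehomogenize {P : MvPolynomial (Fin 2) R} {n : ℕ}
    (hP : P.IsHomogeneous n) :
    (dehomogenize P).support = (Finset.range (n + 1)).filter fun i =>
      P.coeff (Finsupp.single 0 i + Finsupp.single 1 (n - i)) ≠ 0 := by
  ext i
  rw [Polynomial.mem_support_iff, hP.coeff_dehomogenize, mem_filter, mem_range, Nat.lt_succ_iff]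
  split_ifs with hi <;> simp [hi]

theorem IsHomogeneous.dehomogenize_ne_zero {P : MvPolynomial (Fin 2) R} {n : ℕ}
    (hP : P.IsHomogeneous n) (h0 : P ≠ 0) : dehomogenize P ≠ 0 := by
  obtain ⟨m, hm⟩ := support_nonempty.mpr h0
  obtain ⟨hle, hm_eq⟩ := hP.eq_single_add_single hm
  intro h
  have := hP.coeff_dehomogenize (m 0)
  rw [h, Polynomial.coeff_zero, if_pos hle, ← hm_eq] at this
  exact mem_support_iff.mp hm this.symm

end MvPolynomial

/-- over a field of characteristic 0, for nonzero `a₁ a₂` and a nonzero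
homogeneous bivariate polynomial `h` of degree `k`, the polynomial
`(a₁ x₁ + a₂ x₂)^d * h = Σ_{i+j=d+k} c_{i,j} x₁^i x₂^j` has at least `d+1`
nonzero coefficients `c_{i,j}`. -/
theorem bivariate_power_linear_times_homogeneous_sparsity
    {F : Type*} [Field F] [CharZero F] (a₁ a₂ : F) (ha₁ : a₁ ≠ 0) (ha₂ : a₂ ≠ 0)
    (k : ℕ) (h : MvPolynomial (Fin 2) F) (hh : h ≠ 0) (hhom : h.IsHomogeneous k)
    (d : ℕ) :
    d + 1 ≤ ((Finset.range (d + k + 1)).filter fun i =>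
        MvPolynomial.coeff (Finsupp.single 0 i + Finsupp.single 1 (d + k - i))
          ((C a₁ * X 0 + C a₂ * X 1) ^ d * h) ≠ 0).card := by
  set L : MvPolynomial (Fin 2) F := C a₁ * X 0 + C a₂ * X 1
  have hL : L.IsHomogeneous 1 := (isHomogeneous_C_mul_X a₁ 0).add (isHomogeneous_C_mul_X a₂ 1)
  have hP : (L ^ d * h).IsHomogeneous (d + k) := by simpa using (hL.pow d).mul hhom
  set r : F := -a₂ / a₁
  have hL_factor : dehomogenize L = Polynomial.C a₁ * (Polynomial.X - Polynomial.C r) := by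
    simp [L, r, dehomogenize, mul_sub, ← Polynomial.C_mul, mul_div_cancel₀ _ ha₁]
  have hL_ne : dehomogenize L ≠ 0 := by
    rw [hL_factor]
    exact mul_ne_zero (Polynomial.C_ne_zero.mpr ha₁) (Polynomial.X_sub_C_ne_zero r)
  rw [← hP.support_dehomogenize, map_mul, map_pow]
  refine Nat.succ_le_of_lt (Polynomial.lt_card_support_of_X_sub_C_pow_dvd (r := r)
    (by simp [r, ha₁, ha₂]) (mul_ne_zero (pow_ne_zero d hL_ne) (hhom.dehomogenize_ne_zero hh)) ?_)
  rw [hL_factor]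
  exact dvd_mul_of_dvd_left (pow_dvd_pow_of_dvd (dvd_mul_left _ _) d) _
end

section
/- Let F be any field and G = ([n], E) a simple graph. Define the quadratic form f_G = Σ_{{i,j}∈E} x_i x_j + Σ_{i=1}^{n} x_i^2 over F. Then for every S ⊆ [n] with 1 ≤ |S| ≤ n−1, rank(M_S(f_G)) = cutrank_F(S) + 2, where cutrank_F(S) is the rank over F of the |S| × |[n]∖S| 0-1 adjacency matrix between S and its complement. -/
open MvPolynomial
open scoped Classical

/-- The Nisan matrix of `f` with respect to a variable subset `S`: rows indexed by
monomials supported on `S`, columns by monomials supported on the complement of `S`,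
entries the coefficients of the product monomials in `f` (and `0` for index pairs not
respecting the support conditions). -/
noncomputable def nisanMatrix {F : Type*} [Field F] {n : ℕ}
    (f : MvPolynomial (Fin n) F) (S : Finset (Fin n)) :
    Matrix (Fin n →₀ ℕ) (Fin n →₀ ℕ) F :=
  Matrix.of fun m₁ m₂ =>
    if m₁.support ⊆ S ∧ m₂.support ⊆ Sᶜ then f.coeff (m₁ + m₂) else 0

/-- The rank of the Nisan matrix `M_S(f)`: the dimension of the span of its rows. -/
noncomputable def nisanRank {F : Type*} [Field F] {n : ℕ}
    (f : MvPolynomial (Fin n) F) (S : Finset (Fin n)) : ℕ :=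
  Module.finrank F (Submodule.span F (Set.range fun m₁ => nisanMatrix f S m₁))

/-- The cut-rank of `S` in `G` over `F`: the rank of the 0-1 adjacency matrix between
`S` and its complement. -/
noncomputable def cutRank (F : Type*) [Field F] {n : ℕ}
    (G : SimpleGraph (Fin n)) (S : Finset (Fin n)) : ℕ :=
  Matrix.rank (Matrix.of fun (u : {i : Fin n // i ∈ S}) (v : {i : Fin n // i ∉ S}) =>
    if G.Adj u.val v.val then (1 : F) else 0)

/-! For a homogeneous quadratic `f`, the entry of `M_S(f)` at `(m₁, m₂)` vanishes unless
`deg m₁ + deg m₂ = 2`. So the rows of `M_S(f)` fall into three groups supported on pairwise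
disjoint sets of columns, and the rank is the sum of their ranks:
* the row of the monomial `1`, supported on the columns of degree `2`, and nonzero because
  `x_j²` occurs in `f` for some `j ∉ S`;
* the rows of the `x_u` with `u ∈ S`, supported on the columns `x_v` with `v ∉ S`, where they
  form the matrix of coefficients of `x_u x_v`, which for `f_G` is the adjacency matrix between
  `S` and its complement;
* the rows of degree `2`, all multiples of the indicator of the column `1`, and not all zero
  because `x_i²` occurs in `f` for some `i ∈ S`. -/

open Module

section Finsupp

variable {σ : Type*}

theorem Finsupp.exists_eq_single_of_degree_eq_one {m : σ →₀ ℕ}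
    (hm : m.degree = 1) : ∃ i, m = Finsupp.single i 1 := by
  obtain ⟨i, hi⟩ : m.support.Nonempty := by
    rw [Finsupp.support_nonempty_iff]
    rintro rfl
    simp at hm
  have hsplit := Finsupp.single_add_erase i m
  rw [← hsplit, map_add, Finsupp.degree_single] at hm
  have hmi : m i = 1 := by have := Finsupp.mem_support_iff.mp hi; omega
  have herase : (m.erase i).degree = 0 := by omega
  rw [Finsupp.degree_eq_zero_iff] at herase
  exact ⟨i, by rw [← hsplit, herase, add_zero, hmi]⟩

theorem Finsupp.single_one_add_single_one_eq_iff {a b i j : σ} :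
    single a 1 + single b 1 = single i 1 + single j 1 ↔ s(a, b) = s(i, j) := by
  rw [Finsupp.single_add_single_eq_single_add_single one_ne_zero one_ne_zero, Sym2.eq_iff]
  simp

end Finsupp

namespace Submodule

variable {K ι : Type*} [Field K]

theorem disjoint_pi_bot_compl (s : Set ι) :
    Disjoint (pi s fun _ => (⊥ : Submodule K K)) (pi sᶜ fun _ => ⊥) := by
  rw [disjoint_def]
  intro v hs hsc
  funext i
  by_cases hi : i ∈ s
  · exact hs i hi
  · exact hsc i hi

theorem finrank_sup_of_le_pi_bot {p q : Submodule K (ι → K)} [FiniteDimensional K p]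
    [FiniteDimensional K q] (s : Set ι) (hp : p ≤ pi s fun _ => ⊥)
    (hq : q ≤ pi sᶜ fun _ => ⊥) : finrank K ↥(p ⊔ q) = finrank K p + finrank K q := by
  have hpq : Disjoint p q := (disjoint_pi_bot_compl s).mono hp hq
  rw [← finrank_sup_add_finrank_inf_eq, hpq.eq_bot, finrank_bot, add_zero]

theorem finrank_span_range_comp_eq {α κ : Type*} (v : α → ι → K) (e : κ → ι)
    (hv : ∀ a, ∀ i ∉ Set.range e, v a i = 0) :
    finrank K (span K (Set.range fun a => v a ∘ e)) = finrank K (span K (Set.range v)) := by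
  set W := span K (Set.range v)
  have hW : W ≤ pi (Set.range e)ᶜ fun _ => ⊥ := by
    rw [span_le]
    rintro _ ⟨a, rfl⟩ i hi
    exact hv a i hi
  have hinj : Function.Injective ((LinearMap.funLeft K K e).domRestrict W) := by
    intro x y hxy
    ext i
    by_cases hi : i ∈ Set.range e
    · obtain ⟨k, rfl⟩ := hi
      exact congrFun hxy k
    · rw [hW x.2 i hi, hW y.2 i hi]
  rw [← LinearMap.finrank_range_of_inj hinj, LinearMap.range_domRestrict, map_span,
    ← Set.range_comp]
  rfl

end Submodule

section GraphPolynomial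

variable {R σ : Type*} [CommSemiring R]

theorem MvPolynomial.coeff_single_add_single_X_mul_X (a b i j : σ) :
    coeff (Finsupp.single i 1 + Finsupp.single j 1) (X a * X b : MvPolynomial σ R) =
      if s(a, b) = s(i, j) then 1 else 0 := by
  rw [X, X, monomial_mul, one_mul, coeff_monomial]
  exact if_congr Finsupp.single_one_add_single_one_eq_iff rfl rfl

noncomputable def SimpleGraph.quadraticPoly (R : Type*) [CommSemiring R] [Fintype σ]
    (G : SimpleGraph σ) : MvPolynomial σ R :=
  (∑ e ∈ G.edgeFinset, Sym2.lift ⟨fun i j => X i * X j, fun i j => by ring⟩ e) +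
    ∑ i : σ, (X i : MvPolynomial σ R) ^ 2

variable [Fintype σ] (G : SimpleGraph σ)

theorem SimpleGraph.isHomogeneous_quadraticPoly : (G.quadraticPoly R).IsHomogeneous 2 := by
  refine .add (.sum _ _ _ fun e _ => ?_) (.sum _ _ _ fun i _ => (isHomogeneous_X R i).pow 2)
  induction e using Sym2.ind with
  | _ a b => exact (isHomogeneous_X R a).mul (isHomogeneous_X R b)

theorem SimpleGraph.coeff_quadraticPoly (i j : σ) :
    coeff (Finsupp.single i 1 + Finsupp.single j 1) (G.quadraticPoly R) =
      (if G.Adj i j then 1 else 0) + if i = j then 1 else 0 := by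
  have hedge : ∀ e ∈ G.edgeFinset,
      coeff (Finsupp.single i 1 + Finsupp.single j 1)
        (Sym2.lift ⟨fun a b => (X a * X b : MvPolynomial σ R), fun a b => by ring⟩ e) =
        if e = s(i, j) then 1 else 0 := by
    intro e _
    induction e using Sym2.ind with
    | _ a b => exact coeff_single_add_single_X_mul_X a b i j
  rw [quadraticPoly, coeff_add, coeff_sum, coeff_sum, Finset.sum_congr rfl hedge,
    Finset.sum_ite_eq']
  simp only [SimpleGraph.mem_edgeFinset, SimpleGraph.mem_edgeSet, pow_two,
    coeff_single_add_single_X_mul_X]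
  rcases eq_or_ne i j with rfl | hij
  · simp
  · have hdiag : ∀ k, s(k, k) ≠ s(i, j) := by
      rintro k h
      obtain ⟨rfl, rfl⟩ | ⟨rfl, rfl⟩ := Sym2.eq_iff.mp h <;> exact hij rfl
    simp [hij, hdiag]

end GraphPolynomial

section NisanMatrix

variable {F : Type*} [Field F] {n : ℕ} {f : MvPolynomial (Fin n) F} {S : Finset (Fin n)}
  {m₁ m₂ : Fin n →₀ ℕ}

theorem nisanMatrix_apply_of_support_subset (h₁ : m₁.support ⊆ S)
    (h₂ : m₂.support ⊆ Sᶜ) : nisanMatrix f S m₁ m₂ = f.coeff (m₁ + m₂) :=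
  if_pos ⟨h₁, h₂⟩

theorem nisanMatrix_row_eq_zero_of_not_subset (h : ¬m₁.support ⊆ S) :
    nisanMatrix f S m₁ = 0 :=
  funext fun _ => if_neg fun h' => h h'.1

theorem support_subset_compl_of_nisanMatrix_ne_zero (h : nisanMatrix f S m₁ m₂ ≠ 0) :
    m₂.support ⊆ Sᶜ := by
  by_contra h₂
  exact h (if_neg fun h' => h₂ h'.2)

theorem MvPolynomial.IsHomogeneous.nisanMatrix_apply_eq_zero {d : ℕ} (hf : f.IsHomogeneous d)
    (h : m₁.degree + m₂.degree ≠ d) : nisanMatrix f S m₁ m₂ = 0 := by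
  rw [nisanMatrix, Matrix.of_apply]
  split_ifs
  · exact hf.coeff_eq_zero (by rwa [map_add])
  · rfl

theorem MvPolynomial.IsHomogeneous.nisanMatrix_row_of_degree_eq {d : ℕ}
    (hf : f.IsHomogeneous d) (hs : m₁.support ⊆ S) (hm : m₁.degree = d) :
    nisanMatrix f S m₁ = f.coeff m₁ • Pi.single 0 1 := by
  funext m₂
  rcases eq_or_ne m₂ 0 with rfl | hm₂
  · simp [nisanMatrix_apply_of_support_subset hs]
  · rw [hf.nisanMatrix_apply_eq_zero, Pi.smul_apply, Pi.single_eq_of_ne hm₂, smul_zero]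
    rwa [hm, ne_eq, Nat.add_eq_left, Finsupp.degree_eq_zero_iff]

end NisanMatrix

section QuadraticForm

variable {F : Type*} [Field F] {n : ℕ} {f : MvPolynomial (Fin n) F} {S : Finset (Fin n)}

open Submodule

theorem MvPolynomial.IsHomogeneous.span_range_nisanMatrix_eq (hf : f.IsHomogeneous 2)
    {i : Fin n} (hi : i ∈ S) (hfi : f.coeff (Finsupp.single i 2) ≠ 0) :
    span F (Set.range (nisanMatrix f S)) =
      (F ∙ nisanMatrix f S 0) ⊔
        span F (Set.range fun u : {u // u ∈ S} => nisanMatrix f S (Finsupp.single u.1 1)) ⊔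
        (F ∙ Pi.single 0 1) := by
  apply le_antisymm
  · rw [span_le]
    rintro _ ⟨m, rfl⟩
    by_cases hs : m.support ⊆ S
    swap
    · rw [nisanMatrix_row_eq_zero_of_not_subset hs]
      exact zero_mem _
    rcases hdeg : m.degree with _ | _ | _ | k
    · rw [(Finsupp.degree_eq_zero_iff m).mp hdeg]
      exact mem_sup_left (mem_sup_left (mem_span_singleton_self _))
    · obtain ⟨u, rfl⟩ := Finsupp.exists_eq_single_of_degree_eq_one hdeg
      have hu : u ∈ S := hs (by simp)
      exact mem_sup_left (mem_sup_right (subset_span ⟨⟨u, hu⟩, rfl⟩))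
    · rw [hf.nisanMatrix_row_of_degree_eq hs hdeg]
      exact mem_sup_right (smul_mem _ _ (mem_span_singleton_self _))
    · have hzero : nisanMatrix f S m = 0 := by
        funext m₂
        exact hf.nisanMatrix_apply_eq_zero (by omega)
      rw [hzero]
      exact zero_mem _
  · have hδ : Pi.single 0 1 = (f.coeff (Finsupp.single i 2))⁻¹ •
        nisanMatrix f S (Finsupp.single i 2) := by
      rw [hf.nisanMatrix_row_of_degree_eq (by simpa using hi) (by simp), inv_smul_smul₀ hfi]
    refine sup_le (sup_le ?_ ?_) ?_
    · exact span_mono (Set.singleton_subset_iff.mpr ⟨0, rfl⟩)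
    · exact span_mono (Set.range_comp_subset_range _ _)
    · rw [span_singleton_le_iff_mem, hδ]
      exact smul_mem _ _ (subset_span ⟨_, rfl⟩)

theorem MvPolynomial.IsHomogeneous.finrank_span_nisanMatrix_rows_single
    (hf : f.IsHomogeneous 2) :
    finrank F (span F (Set.range fun u : {u // u ∈ S} =>
        nisanMatrix f S (Finsupp.single u.1 1))) =
      (Matrix.of fun (u : {u // u ∈ S}) (v : {v // v ∉ S}) =>
        f.coeff (Finsupp.single u.1 1 + Finsupp.single v.1 1)).rank := by
  rw [Matrix.rank_eq_finrank_span_row,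
    ← finrank_span_range_comp_eq _ fun v : {v // v ∉ S} => Finsupp.single v.1 1]
  · refine congrArg (fun s => finrank F (span F (Set.range s))) ?_
    funext u v
    exact nisanMatrix_apply_of_support_subset (by simp) (by simp [v.2])
  · intro u m hm
    by_contra hne
    have hdeg : m.degree = 1 := by
      by_contra hdeg
      exact hne (hf.nisanMatrix_apply_eq_zero (by simp; omega))
    obtain ⟨v, rfl⟩ := Finsupp.exists_eq_single_of_degree_eq_one hdeg
    have hv : v ∉ S := by simpa using support_subset_compl_of_nisanMatrix_ne_zero hne
    exact hm ⟨⟨v, hv⟩, rfl⟩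

theorem MvPolynomial.IsHomogeneous.nisanRank_eq_rank_add_two (hf : f.IsHomogeneous 2)
    {i j : Fin n} (hi : i ∈ S) (hfi : f.coeff (Finsupp.single i 2) ≠ 0)
    (hj : j ∉ S) (hfj : f.coeff (Finsupp.single j 2) ≠ 0) :
    nisanRank f S =
      (Matrix.of fun (u : {u // u ∈ S}) (v : {v // v ∉ S}) =>
        f.coeff (Finsupp.single u.1 1 + Finsupp.single v.1 1)).rank + 2 := by
  set R₁ := span F (Set.range fun u : {u // u ∈ S} => nisanMatrix f S (Finsupp.single u.1 1))
  have : FiniteDimensional F R₁ := FiniteDimensional.span_of_finite F (Set.finite_range _)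
  have hrow₀ : nisanMatrix f S 0 ≠ 0 := by
    intro h
    apply hfj
    simpa [nisanMatrix_apply_of_support_subset, hj] using congrFun h (Finsupp.single j 2)
  have h₀₁ : finrank F ↥((F ∙ nisanMatrix f S 0) ⊔ R₁) = 1 + finrank F R₁ := by
    rw [finrank_sup_of_le_pi_bot {m | m.degree = 1}, finrank_span_singleton hrow₀]
    · rw [span_singleton_le_iff_mem, mem_pi]
      intro m hm
      exact hf.nisanMatrix_apply_eq_zero (by simp_all)
    · rw [span_le]
      rintro _ ⟨u, rfl⟩ m hm
      simp only [Set.mem_compl_iff, Set.mem_ofPred_eq] at hm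
      exact hf.nisanMatrix_apply_eq_zero (by simp; omega)
  rw [nisanRank, hf.span_range_nisanMatrix_eq hi hfi, finrank_sup_of_le_pi_bot {0}, h₀₁,
    finrank_span_singleton (by simp), hf.finrank_span_nisanMatrix_rows_single]
  · omega
  · refine sup_le ((span_singleton_le_iff_mem _ _).mpr ?_) (span_le.mpr ?_)
    · rintro _ rfl
      exact hf.nisanMatrix_apply_eq_zero (by simp)
    · rintro _ ⟨u, rfl⟩ _ rfl
      exact hf.nisanMatrix_apply_eq_zero (by simp)
  · rw [span_singleton_le_iff_mem, mem_pi]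
    intro m hm
    exact Pi.single_eq_of_ne hm _

end QuadraticForm

/-- for the quadratic form `f_G = Σ_{{i,j}∈E} x_i x_j + Σ_i x_i²` and every
`S ⊆ [n]` with `1 ≤ |S| ≤ n-1`, the Nisan matrix `M_S(f_G)` has rank
`cutrank_F(S) + 2`. -/
theorem nisanRank_quadratic_form
    {F : Type*} [Field F] {n : ℕ} (G : SimpleGraph (Fin n)) (S : Finset (Fin n))
    (h1 : 1 ≤ S.card) (h2 : S.card ≤ n - 1) :
    nisanRank
      ((∑ e ∈ G.edgeFinset, Sym2.lift ⟨fun i j => X i * X j, fun i j => by ring⟩ e) +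
        ∑ i : Fin n, (X i : MvPolynomial (Fin n) F) ^ 2) S
      = cutRank F G S + 2 := by
  obtain ⟨i, hi⟩ := Finset.card_pos.mp h1
  obtain ⟨j, hj⟩ : ∃ j, j ∉ S := by
    by_contra! hS
    rw [Finset.eq_univ_iff_forall.mpr hS, Finset.card_univ, Fintype.card_fin] at h1 h2
    omega
  have hsq : ∀ k, coeff (Finsupp.single k 2) (G.quadraticPoly F) = 1 := by
    intro k
    simpa [← Finsupp.single_add] using G.coeff_quadraticPoly (R := F) k k
  change nisanRank (G.quadraticPoly F) S = _
  rw [G.isHomogeneous_quadraticPoly.nisanRank_eq_rank_add_two hi (by simp [hsq]) hj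
    (by simp [hsq]), cutRank]
  congr 3
  funext u v
  have huv : u.1 ≠ v.1 := fun h => v.2 (h ▸ u.2)
  simp [G.coeff_quadraticPoly, huv]
end
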